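/- Let G = Z_2^n and suppose A ⊆ G decomposes as A = H ∪ A_1 ∪ ... ∪ A_m (disjoint) where H is a subgroup of index 2^m with m ≥ 1 and each A_i is a nonempty subset of a distinct coset e_{h+i}+H with {e_{h+1}+H,...,e_{h+m}+H} a basis of G/H. Then |A+A| ≥ (m+3)/2 · |G|/2^m + (m−1)/2 · |A|. -/
import Mathlib

open Finset Pointwise

/-- The subgroup `H = span{e_1, ..., e_h}` of `(ZMod 2)^n`, as a finset:
all vectors vanishing on coordinates with index `≥ h`. -/
def Hsub (n h : ℕ) : Finset (Fin n → ZMod 2) :=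
  Finset.univ.filter fun x => ∀ i : Fin n, h ≤ (i : ℕ) → x i = 0

/-- The standard affine basis `E = {0, e_1, ..., e_n}` of `(ZMod 2)^n`. -/
def stdE (n : ℕ) : Finset (Fin n → ZMod 2) :=
  insert 0 (Finset.univ.image fun i => Pi.single i (1 : ZMod 2))

/-- The part of `A` lying in the coset `e_i + H`. -/
def Apart (n h : ℕ) (A : Finset (Fin n → ZMod 2)) (i : Fin n) : Finset (Fin n → ZMod 2) :=
  A ∩ (Hsub n h).image fun y => Pi.single i (1 : ZMod 2) + y

lemma mem_Hsub {n h : ℕ} {x : Fin n → ZMod 2} :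
    x ∈ Hsub n h ↔ ∀ i : Fin n, h ≤ (i : ℕ) → x i = 0 := by
  simp [Hsub]

lemma card_Hsub {n h : ℕ} (hh : h ≤ n) : (Hsub n h).card = 2 ^ h := by
  have himg : Hsub n h = (Finset.univ : Finset (Fin h → ZMod 2)).image
      (fun y => fun i : Fin n => if hi : (i : ℕ) < h then y ⟨i, hi⟩ else 0) := by
    ext x
    simp only [mem_Hsub, Finset.mem_image, mem_univ, true_and]
    constructor
    · intro hx
      refine ⟨fun j => x (Fin.castLE hh j), ?_⟩
      funext i
      by_cases hi : (i : ℕ) < h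
      · simp only [hi, dif_pos]
        congr 1
      · simp only [hi, dif_neg]
        exact (hx i (Nat.not_lt.1 hi)).symm
    · rintro ⟨y, rfl⟩ i hi
      simp [Nat.not_lt.2 hi]
  rw [himg, Finset.card_image_of_injective _ ?_]
  · simp
  · intro y y' hyy
    funext j
    have := congrFun hyy (Fin.castLE hh j)
    simpa [Fin.castLE, j.isLt] using this

lemma sum_fiber_le {α β : Type*} [DecidableEq α] [DecidableEq β] (T : Finset α) (f : α → β)
    (K : Finset β) : (∑ k ∈ K, (T.filter fun x => f x = k).card) ≤ T.card := by
  rw [← card_biUnion]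
  · exact card_le_card (biUnion_subset.2 fun k _ => filter_subset _ _)
  · intro p _ q _ hpq
    simp only [disjoint_left, mem_filter]
    rintro x ⟨-, hx⟩ ⟨-, hx'⟩
    exact hpq (hx ▸ hx')

lemma Apart_high {n h : ℕ} {A : Finset (Fin n → ZMod 2)} {i : Fin n} {x : Fin n → ZMod 2}
    (hx : x ∈ Apart n h A i) {k : Fin n} (hk : h ≤ (k : ℕ)) :
    x k = (Pi.single i (1 : ZMod 2) : Fin n → ZMod 2) k := by
  rw [Apart, mem_inter] at hx
  obtain ⟨-, hx2⟩ := hx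
  rw [Finset.mem_image] at hx2
  obtain ⟨y, hy, rfl⟩ := hx2
  simp [mem_Hsub.1 hy k hk]

lemma Apart_subset {n h : ℕ} {A : Finset (Fin n → ZMod 2)} {i : Fin n} :
    Apart n h A i ⊆ A := inter_subset_left

/-- The "high part" key of a vector. -/
def hkey (n h : ℕ) (x : Fin n → ZMod 2) : Finset (Fin n) :=
  Finset.univ.filter fun k => h ≤ (k : ℕ) ∧ x k = 1

lemma hkey_Hsub {n h : ℕ} {x : Fin n → ZMod 2} (hx : x ∈ Hsub n h) : hkey n h x = ∅ := by
  ext k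
  simp only [hkey, mem_filter, mem_univ, true_and, notMem_empty, iff_false, not_and]
  intro hk
  rw [mem_Hsub.1 hx k hk]
  exact zero_ne_one

lemma hkey_single {n h : ℕ} {A : Finset (Fin n → ZMod 2)} {i : Fin n} (hi : h ≤ (i : ℕ))
    {x : Fin n → ZMod 2} (hx : x ∈ Apart n h A i + Hsub n h) : hkey n h x = {i} := by
  obtain ⟨a, ha, y, hy, rfl⟩ := Finset.mem_add.1 hx
  ext k
  simp only [hkey, mem_filter, mem_univ, true_and, mem_singleton]
  constructor
  · rintro ⟨hk, hval⟩
    rw [Pi.add_apply, Apart_high ha hk, mem_Hsub.1 hy k hk, add_zero] at hval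
    by_contra hne'
    rw [Pi.single_apply, if_neg hne'] at hval
    exact one_ne_zero hval.symm
  · rintro rfl
    refine ⟨hi, ?_⟩
    rw [Pi.add_apply, Apart_high ha hi, mem_Hsub.1 hy k hi, add_zero, Pi.single_eq_same]

lemma hkey_pair {n h : ℕ} {A : Finset (Fin n → ZMod 2)} {i j : Fin n} (hi : h ≤ (i : ℕ))
    (hj : h ≤ (j : ℕ)) (hij : i ≠ j) {x : Fin n → ZMod 2}
    (hx : x ∈ Apart n h A i + Apart n h A j) : hkey n h x = {i, j} := by
  obtain ⟨a, ha, b, hb, rfl⟩ := Finset.mem_add.1 hx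
  ext k
  simp only [hkey, mem_filter, mem_univ, true_and, mem_insert, mem_singleton]
  constructor
  · rintro ⟨hk, hval⟩
    rw [Pi.add_apply, Apart_high ha hk, Apart_high hb hk] at hval
    by_contra hne'
    push_neg at hne'
    rw [Pi.single_apply, Pi.single_apply, if_neg hne'.1, if_neg hne'.2, add_zero] at hval
    exact one_ne_zero hval.symm
  · intro hk
    rcases hk with rfl | rfl
    · refine ⟨hi, ?_⟩
      rw [Pi.add_apply, Apart_high ha hi, Apart_high hb hi, Pi.single_eq_same,
        Pi.single_apply, if_neg hij, add_zero]
    · refine ⟨hj, ?_⟩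
      rw [Pi.add_apply, Apart_high ha hj, Apart_high hb hj, Pi.single_eq_same,
        Pi.single_apply, if_neg (Ne.symm hij), zero_add]

theorem stmt9 (n h m : ℕ) (hm : m = n - h) (hm1 : 1 ≤ m)
    (A : Finset (Fin n → ZMod 2))
    (hdecomp : A = Hsub n h ∪
      (Finset.univ.filter fun i : Fin n => h ≤ (i : ℕ)).biUnion (Apart n h A))
    (hne : ∀ i : Fin n, h ≤ (i : ℕ) → (Apart n h A i).Nonempty) :
    ((m : ℝ) + 3) / 2 * ((2 ^ n : ℝ) / 2 ^ m) + ((m : ℝ) - 1) / 2 * A.card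
      ≤ ((A + A).card : ℝ) := by
  classical
  have hlt : h < n := by omega
  have hh : h ≤ n := hlt.le
  have hn : n = h + m := by omega
  set S : Finset (Fin n) := Finset.univ.filter fun i : Fin n => h ≤ (i : ℕ) with hSdef
  have hmemS : ∀ i : Fin n, i ∈ S ↔ h ≤ (i : ℕ) := by
    intro i; simp [hSdef]
  have hScard : S.card = m := by
    have hSI : S = Finset.Ici (⟨h, hlt⟩ : Fin n) := by
      ext i
      simp [hSdef, Fin.le_def]
    rw [hSI, Fin.card_Ici]
    simp only [Fin.val_mk]
    omega
  set P : Finset (Fin n × Fin n) := S.offDiag.filter fun q => q.1 < q.2 with hPdef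
  have hHA : Hsub n h ⊆ A := by rw [hdecomp]; exact subset_union_left
  have h0H : (0 : Fin n → ZMod 2) ∈ Hsub n h := by simp [mem_Hsub]
  set T := A + A with hTdef
  set fib : Finset (Fin n) → ℕ :=
    fun k => (T.filter fun x => hkey n h x = k).card with hfibdef
  -- fiber lower bounds
  have hfib0 : 2 ^ h ≤ fib ∅ := by
    rw [← card_Hsub hh]
    apply card_le_card
    intro x hx
    rw [mem_filter]
    exact ⟨Finset.mem_add.2 ⟨x, hHA hx, 0, hHA h0H, add_zero x⟩, hkey_Hsub hx⟩
  have hfib1 : ∀ i ∈ S, 2 ^ h ≤ fib {i} := by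
    intro i hiS
    have hi : h ≤ (i : ℕ) := (hmemS i).1 hiS
    calc 2 ^ h = (Hsub n h).card := (card_Hsub hh).symm
      _ ≤ (Apart n h A i + Hsub n h).card := card_le_card_add_left (hne i hi)
      _ ≤ fib {i} := by
          apply card_le_card
          intro x hx
          rw [mem_filter]
          exact ⟨add_subset_add Apart_subset hHA hx, hkey_single hi hx⟩
  have hfib2 : ∀ q ∈ P, (Apart n h A q.1).card + (Apart n h A q.2).card
      ≤ 2 * fib {q.1, q.2} := by
    intro q hq
    obtain ⟨hq1S, hq2S, hne12⟩ := mem_offDiag.1 (mem_filter.1 hq).1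
    have hi : h ≤ (q.1 : ℕ) := (hmemS q.1).1 hq1S
    have hj : h ≤ (q.2 : ℕ) := (hmemS q.2).1 hq2S
    have hsub : Apart n h A q.1 + Apart n h A q.2 ⊆
        T.filter fun x => hkey n h x = {q.1, q.2} := by
      intro x hx
      rw [mem_filter]
      exact ⟨add_subset_add Apart_subset Apart_subset hx, hkey_pair hi hj hne12 hx⟩
    have c1 : (Apart n h A q.1).card ≤ (Apart n h A q.1 + Apart n h A q.2).card :=
      card_le_card_add_right (hne q.2 hj)
    have c2 : (Apart n h A q.2).card ≤ (Apart n h A q.1 + Apart n h A q.2).card :=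
      card_le_card_add_left (hne q.1 hi)
    have c3 : (Apart n h A q.1 + Apart n h A q.2).card ≤ fib {q.1, q.2} :=
      card_le_card hsub
    omega
  -- sum of fibers bound
  have hnotmem : (∅ : Finset (Fin n)) ∉
      (S.image fun i => ({i} : Finset (Fin n))) ∪
        P.image fun q => ({q.1, q.2} : Finset (Fin n)) := by
    intro hc
    rcases mem_union.1 hc with hc | hc <;> obtain ⟨w, -, hw⟩ := Finset.mem_image.1 hc
    · exact (singleton_ne_empty w) hw
    · exact (insert_ne_empty _ _) hw
  have hdisj : Disjoint (S.image fun i => ({i} : Finset (Fin n)))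
      (P.image fun q => ({q.1, q.2} : Finset (Fin n))) := by
    rw [disjoint_left]
    rintro s hs1 hs2
    obtain ⟨i, -, rfl⟩ := Finset.mem_image.1 hs1
    obtain ⟨q, hqP, hpair⟩ := Finset.mem_image.1 hs2
    obtain ⟨-, -, hne12⟩ := mem_offDiag.1 (mem_filter.1 hqP).1
    have : ({q.1, q.2} : Finset (Fin n)).card = 2 := by
      rw [card_insert_of_notMem (by simp [hne12]), card_singleton]
    rw [hpair, card_singleton] at this
    omega
  have hinj1 : ∀ x ∈ S, ∀ y ∈ S, ({x} : Finset (Fin n)) = {y} → x = y := by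
    intro x _ y _ hxy
    exact singleton_injective hxy
  have hinj2 : ∀ q ∈ P, ∀ q' ∈ P,
      ({q.1, q.2} : Finset (Fin n)) = {q'.1, q'.2} → q = q' := by
    intro q hq q' hq' hqq
    have hlt1 : q.1 < q.2 := (mem_filter.1 hq).2
    have hlt2 : q'.1 < q'.2 := (mem_filter.1 hq').2
    have hset : ({q.1, q.2} : Set (Fin n)) = {q'.1, q'.2} := by
      have := congrArg (fun s : Finset (Fin n) => (s : Set (Fin n))) hqq
      simpa using this
    rcases Set.pair_eq_pair_iff.1 hset with ⟨h1, h2⟩ | ⟨h1, h2⟩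
    · exact Prod.ext h1 h2
    · exfalso
      rw [h1, h2] at hlt1
      exact absurd (hlt2.trans hlt1) (lt_irrefl _)
  have hsum : fib ∅ + ((∑ i ∈ S, fib {i}) + ∑ q ∈ P, fib {q.1, q.2}) ≤ T.card := by
    have h1 := sum_fiber_le T (hkey n h)
      (insert (∅ : Finset (Fin n)) ((S.image fun i => ({i} : Finset (Fin n))) ∪
        P.image fun q => ({q.1, q.2} : Finset (Fin n))))
    rw [sum_insert hnotmem, sum_union hdisj, sum_image hinj1, sum_image hinj2] at h1
    exact h1
  -- pair sum arithmetic
  set s0 := ∑ i ∈ S, (Apart n h A i).card with hs0def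
  have hPsum : ∑ q ∈ P, ((Apart n h A q.1).card + (Apart n h A q.2).card)
      = (m - 1) * s0 := by
    have hswap : ∑ q ∈ P, (Apart n h A q.2).card
        = ∑ q ∈ S.offDiag.filter (fun q => ¬ q.1 < q.2), (Apart n h A q.1).card := by
      apply Finset.sum_nbij' (fun q : Fin n × Fin n => (q.2, q.1))
        (fun q : Fin n × Fin n => (q.2, q.1))
      · intro q hq
        obtain ⟨h1, h2, h3⟩ := mem_offDiag.1 (mem_filter.1 hq).1
        have hlt' : q.1 < q.2 := (mem_filter.1 hq).2
        exact mem_filter.2 ⟨mem_offDiag.2 ⟨h2, h1, Ne.symm h3⟩, not_lt.2 hlt'.le⟩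
      · intro q hq
        obtain ⟨h1, h2, h3⟩ := mem_offDiag.1 (mem_filter.1 hq).1
        have hlt' : q.2 < q.1 := lt_of_le_of_ne (not_lt.1 (mem_filter.1 hq).2) (Ne.symm h3)
        exact mem_filter.2 ⟨mem_offDiag.2 ⟨h2, h1, Ne.symm h3⟩, hlt'⟩
      · intro q _; rfl
      · intro q _; rfl
      · intro q _; rfl
    have hprod : ∑ q ∈ S ×ˢ S, (Apart n h A q.1).card = m * s0 := by
      rw [Finset.sum_product]
      simp only [sum_const, smul_eq_mul]
      rw [hScard, ← Finset.mul_sum]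
    have hdiag : ∑ q ∈ S.diag, (Apart n h A q.1).card = s0 := by
      rw [Finset.sum_diag]
    have hsplitU : ∑ q ∈ S ×ˢ S, (Apart n h A q.1).card
        = s0 + ∑ q ∈ S.offDiag, (Apart n h A q.1).card := by
      rw [← Finset.diag_union_offDiag S, sum_union (Finset.disjoint_diag_offDiag S), hdiag]
    have hsplitP : ∑ q ∈ S.offDiag, (Apart n h A q.1).card
        = (∑ q ∈ P, (Apart n h A q.1).card)
          + ∑ q ∈ S.offDiag.filter (fun q => ¬ q.1 < q.2), (Apart n h A q.1).card := by
      rw [sum_filter_add_sum_filter_not]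
    have hoff : ∑ q ∈ S.offDiag, (Apart n h A q.1).card = m * s0 - s0 := by
      rw [← hprod, hsplitU, Nat.add_sub_cancel_left]
    rw [sum_add_distrib, hswap, ← hsplitP, hoff, Nat.sub_one_mul]
  -- card of A
  have hAcard : A.card = 2 ^ h + s0 := by
    have hdisjHB : Disjoint (Hsub n h) (S.biUnion (Apart n h A)) := by
      rw [disjoint_left]
      intro x hxH hxB
      obtain ⟨i, hiS, hxi⟩ := mem_biUnion.1 hxB
      have hi : h ≤ (i : ℕ) := (hmemS i).1 hiS
      have h1 : x i = 1 := by rw [Apart_high hxi hi, Pi.single_eq_same]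
      rw [mem_Hsub.1 hxH i hi] at h1
      exact zero_ne_one h1
    have hdisjAB : ∀ i ∈ S, ∀ j ∈ S, i ≠ j →
        Disjoint (Apart n h A i) (Apart n h A j) := by
      intro i hiS j hjS hij
      rw [disjoint_left]
      intro x hxi hxj
      have hj : h ≤ (j : ℕ) := (hmemS j).1 hjS
      have e1 := Apart_high hxi hj
      have e2 := Apart_high hxj hj
      have e3 := e1.symm.trans e2
      simp [Pi.single_apply, Ne.symm hij] at e3
    conv_lhs => rw [hdecomp]
    rw [card_union_of_disjoint hdisjHB, card_Hsub hh, card_biUnion hdisjAB]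
  -- combine, in ℕ
  have hfinal : 2 * (2 ^ h + m * 2 ^ h) + (m - 1) * s0 ≤ 2 * T.card := by
    have e1 : (∑ i ∈ S, 2 ^ h) ≤ ∑ i ∈ S, fib {i} := sum_le_sum hfib1
    rw [sum_const, hScard, smul_eq_mul] at e1
    have e2 : (∑ q ∈ P, ((Apart n h A q.1).card + (Apart n h A q.2).card))
        ≤ ∑ q ∈ P, 2 * fib {q.1, q.2} := sum_le_sum hfib2
    rw [hPsum, ← Finset.mul_sum] at e2
    have := hsum
    linarith
  -- pass to the reals
  have hcast : ((m : ℝ) - 1) = ((m - 1 : ℕ) : ℝ) := by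
    rw [Nat.cast_sub hm1, Nat.cast_one]
  have hpow : (2 : ℝ) ^ n / 2 ^ m = 2 ^ h := by
    rw [hn, pow_add, mul_div_assoc, div_self (by positivity), mul_one]
  rw [hpow]
  have hfR : 2 * ((2 : ℝ) ^ h + (m : ℝ) * 2 ^ h) + ((m : ℝ) - 1) * (s0 : ℝ)
      ≤ 2 * (T.card : ℝ) := by
    rw [hcast]
    exact_mod_cast hfinal
  have hAR : (A.card : ℝ) = 2 ^ h + (s0 : ℝ) := by exact_mod_cast hAcard
  rw [hAR]
  linarith
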